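/- arXiv:2207.03229 — 7 statements merged into one kernel-verified Lean document; each statement's English description precedes it below -/
import Mathlib

section
/- Let T be a contraction on a Hilbert space H, and let Q = Q_{T*} be the positive square root of the SOT-limit of T^n T^{*n}. Then ‖Q T* h‖ = ‖Q h‖ for all h ∈ H; hence the densely defined map Qh ↦ Q T* h extends to an isometry of the closure of Ran Q into itself. -/
/-!
Since `‖T*ⁿ h‖² = ⟪Tⁿ T*ⁿ h, h⟫ → ‖Q h‖²`, both `‖Q T* h‖²` and `‖Q h‖²` are the limit of
`‖T*ⁿ⁺¹ h‖²`: the first by applying this to `T* h`, the second by shifting the index.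
-/

open ContinuousLinearMap Filter Topology

theorem ContinuousLinearMap.adjoint_pow {𝕜 E : Type*} [RCLike 𝕜] [NormedAddCommGroup E]
    [InnerProductSpace 𝕜 E] [CompleteSpace E] (T : E →L[𝕜] E) (n : ℕ) :
    adjoint (T ^ n) = adjoint T ^ n := by
  rw [← star_eq_adjoint, star_pow, star_eq_adjoint]

theorem tendsto_norm_adjoint_apply_sq {𝕜 E : Type*} [RCLike 𝕜] [NormedAddCommGroup E]
    [InnerProductSpace 𝕜 E] [CompleteSpace E] {A : ℕ → E →L[𝕜] E} {Q : E →L[𝕜] E}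
    (hQ : IsSelfAdjoint Q)
    (hA : ∀ x, Tendsto (fun n => (A n ∘L adjoint (A n)) x) atTop (𝓝 ((Q ∘L Q) x))) (x : E) :
    Tendsto (fun n => ‖adjoint (A n) x‖ ^ 2) atTop (𝓝 (‖Q x‖ ^ 2)) := by
  have hnorm (B : E →L[𝕜] E) :
      ‖adjoint B x‖ ^ 2 = RCLike.re (inner 𝕜 ((B ∘L adjoint B) x) x) := by
    rw [apply_norm_sq_eq_inner_adjoint_left, adjoint_adjoint]
  have hQx : ‖Q x‖ ^ 2 = RCLike.re (inner 𝕜 ((Q ∘L Q) x) x) := by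
    simpa only [hQ.adjoint_eq] using hnorm Q
  simp only [hnorm, hQx]
  exact RCLike.continuous_re.continuousAt.tendsto.comp ((hA x).inner tendsto_const_nhds)

theorem stmt3_general {H : Type*} [NormedAddCommGroup H] [InnerProductSpace ℂ H] [CompleteSpace H]
    (T : H →L[ℂ] H)
    (Q : H →L[ℂ] H) (hQ : Q.IsPositive)
    (hQ2 : ∀ x : H, Tendsto (fun n : ℕ => ((T ^ n) ∘L ((adjoint T) ^ n)) x) atTop
      (nhds ((Q ∘L Q) x))) :
    ∀ h : H, ‖Q (adjoint T h)‖ = ‖Q h‖ := by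
  intro h
  have hlim := tendsto_norm_adjoint_apply_sq (A := (T ^ ·)) hQ.isSelfAdjoint
    (by simpa only [adjoint_pow] using hQ2)
  simp only [adjoint_pow] at hlim
  have hshift : Tendsto (fun n => ‖(adjoint T ^ (n + 1)) h‖ ^ 2) atTop
      (𝓝 (‖Q (adjoint T h)‖ ^ 2)) := by
    simpa only [pow_succ (adjoint T), mul_apply_eq_comp] using hlim (adjoint T h)
  have hsq := tendsto_nhds_unique hshift ((tendsto_add_atTop_iff_nat 1).2 (hlim h))
  exact (pow_left_inj₀ (norm_nonneg _) (norm_nonneg _) two_ne_zero).1 hsq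

/-- For a contraction `T` and `Q` the positive square root of the SOT-limit of
`T^n T^{*n}`, one has `‖Q T* h‖ = ‖Q h‖` for all `h`. -/
theorem stmt3 {H : Type*} [NormedAddCommGroup H] [InnerProductSpace ℂ H] [CompleteSpace H]
    (T : H →L[ℂ] H) (hT : ‖T‖ ≤ 1)
    (Q : H →L[ℂ] H) (hQ : Q.IsPositive)
    (hQ2 : ∀ x : H, Tendsto (fun n : ℕ => ((T ^ n) ∘L ((adjoint T) ^ n)) x) atTop
      (nhds ((Q ∘L Q) x))) :
    ∀ h : H, ‖Q (adjoint T h)‖ = ‖Q h‖ :=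
  stmt3_general T Q hQ hQ2
end

section
/- Let T be a contraction on a Hilbert space H, and let A ∈ B(H) be a contraction commuting with T. Let Q be the positive square root of SOT-lim T^n T^{*n}. Then ⟨A Q² A* h, h⟩ ≤ ⟨Q² h, h⟩ for all h ∈ H, i.e. A Q² A* ≤ Q² in the Loewner order; consequently ‖Q A* h‖ ≤ ‖Q h‖ for all h. -/
/-! Since `T^n T^{*n} = (T^{*n})^* T^{*n}`, its quadratic form at `x` is `‖T^{*n} x‖²`. The
contraction `A*` commutes with `T^{*n}`, so `‖T^{*n} A* h‖ = ‖A* T^{*n} h‖ ≤ ‖T^{*n} h‖`, and letting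
`n → ∞` gives `⟪Q² A* h, A* h⟫ ≤ ⟪Q² h, h⟫`. As `Q` is self-adjoint, `⟪Q² x, x⟫ = ‖Q x‖²`. -/

open ContinuousLinearMap Filter RCLike

section
variable {𝕜 E : Type*} [RCLike 𝕜] [NormedAddCommGroup E] [InnerProductSpace 𝕜 E]

theorem tendsto_re_inner_apply_self {ι : Type*} {l : Filter ι} {P : ι → E →L[𝕜] E}
    {P₀ : E →L[𝕜] E} (hP : ∀ x, Tendsto (fun i => P i x) l (nhds (P₀ x))) (x : E) :
    Tendsto (fun i => re (inner 𝕜 (P i x) x)) l (nhds (re (inner 𝕜 (P₀ x) x))) :=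
  (continuous_re.tendsto _).comp ((hP x).inner tendsto_const_nhds)

variable [CompleteSpace E]

theorem re_inner_adjoint_comp_self_apply_le_of_commute {S B : E →L[𝕜] E} (hBS : Commute B S)
    (hB : ‖B‖ ≤ 1) (x : E) :
    re (inner 𝕜 ((adjoint S ∘L S) (B x)) (B x)) ≤ re (inner 𝕜 ((adjoint S ∘L S) x) x) := by
  rw [← apply_norm_sq_eq_inner_adjoint_left, ← apply_norm_sq_eq_inner_adjoint_left,
    show S (B x) = B (S x) from congr($hBS.eq.symm x)]
  gcongr
  simpa using B.le_of_opNorm_le hB (S x)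

end

theorem stmt4_general {H : Type*} [NormedAddCommGroup H] [InnerProductSpace ℂ H] [CompleteSpace H]
    (T A : H →L[ℂ] H) (hA : ‖A‖ ≤ 1) (hAT : A ∘L T = T ∘L A)
    (Q : H →L[ℂ] H) (hQ : Q.IsPositive)
    (hQ2 : ∀ x : H, Tendsto (fun n : ℕ => ((T ^ n) ∘L ((adjoint T) ^ n)) x) atTop
      (nhds ((Q ∘L Q) x))) :
    (∀ h : H, ((inner ℂ ((A ∘L (Q ∘L Q) ∘L adjoint A) h) h : ℂ)).re ≤
        ((inner ℂ ((Q ∘L Q) h) h : ℂ)).re) ∧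
      ∀ h : H, ‖Q (adjoint A h)‖ ≤ ‖Q h‖ := by
  have hTn_eq (n : ℕ) :
      (T ^ n) ∘L (adjoint T ^ n) = adjoint (adjoint T ^ n) ∘L (adjoint T ^ n) := by
    simp only [← star_eq_adjoint, star_pow, star_star]
  have hA_comm (n : ℕ) : Commute (adjoint A) (adjoint T ^ n) := (Commute.star_star hAT).pow_right n
  have hform_le (h : H) : re (inner ℂ ((Q ∘L Q) (adjoint A h)) (adjoint A h)) ≤
      re (inner ℂ ((Q ∘L Q) h) h) :=
    le_of_tendsto_of_tendsto' (tendsto_re_inner_apply_self hQ2 _)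
      (tendsto_re_inner_apply_self hQ2 _) fun n => by
        rw [hTn_eq]
        exact re_inner_adjoint_comp_self_apply_le_of_commute (hA_comm n)
          (by rwa [LinearIsometryEquiv.norm_map]) h
  refine ⟨fun h => ?_, fun h => ?_⟩
  · rw [comp_apply, comp_apply, ← adjoint_inner_right]
    exact hform_le h
  · rw [← sq_le_sq₀ (norm_nonneg _) (norm_nonneg _), apply_norm_sq_eq_inner_adjoint_left,
      apply_norm_sq_eq_inner_adjoint_left, hQ.isSelfAdjoint.adjoint_eq]
    exact hform_le h

/-- For a contraction `T`, a contraction `A` commuting with `T`, and `Q` the positive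
square root of the SOT-limit of `T^n T^{*n}`, one has `A Q² A* ≤ Q²` in the Loewner
order, and consequently `‖Q A* h‖ ≤ ‖Q h‖`. -/
theorem stmt4 {H : Type*} [NormedAddCommGroup H] [InnerProductSpace ℂ H] [CompleteSpace H]
    (T A : H →L[ℂ] H) (hT : ‖T‖ ≤ 1) (hA : ‖A‖ ≤ 1) (hAT : A ∘L T = T ∘L A)
    (Q : H →L[ℂ] H) (hQ : Q.IsPositive)
    (hQ2 : ∀ x : H, Tendsto (fun n : ℕ => ((T ^ n) ∘L ((adjoint T) ^ n)) x) atTop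
      (nhds ((Q ∘L Q) x))) :
    (∀ h : H, ((inner ℂ ((A ∘L (Q ∘L Q) ∘L adjoint A) h) h : ℂ)).re ≤
        ((inner ℂ ((Q ∘L Q) h) h : ℂ)).re) ∧
      ∀ h : H, ‖Q (adjoint A h)‖ ≤ ‖Q h‖ :=
  stmt4_general T A hA hAT Q hQ hQ2
end

section
/- Let T be a contraction on a Hilbert space H. Then for all h ∈ H one has ‖h‖² = Σ_{n=0}^∞ ‖D_{T*} T^{*n} h‖² + lim_{n→∞} ‖T^{*n} h‖², where D_{T*} = (I − TT*)^{1/2}. In particular the map h ↦ ((D_{T*}T^{*n}h)_{n≥0}, Qh) into ℓ²(H) ⊕ H is an isometry, where Q² = SOT-lim T^n T^{*n}. -/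
open ContinuousLinearMap Filter Topology
open scoped InnerProduct

/-!
Since `D_{T*}² = I - TT*`, one has `‖D_{T*} x‖² = ‖x‖² - ‖T* x‖²`, so the terms of the
series telescope along `x = T^{*n} h`: the partial sums are `‖h‖² - ‖T^{*N} h‖²`. The
decreasing sequence `‖T^{*N} h‖² = re ⟪T^N T^{*N} h, h⟫` converges to
`re ⟪Q² h, h⟫ = ‖Q h‖²`.
-/

lemma hasSum_sub_succ_of_antitone {a : ℕ → ℝ} {l : ℝ} (ha : Antitone a)
    (hl : Tendsto a atTop (𝓝 l)) : HasSum (fun n => a n - a (n + 1)) (a 0 - l) := by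
  rw [hasSum_iff_tendsto_nat_of_nonneg fun n => sub_nonneg.2 (ha n.le_succ)]
  simpa only [Finset.sum_range_sub'] using tendsto_const_nhds.sub hl

namespace ContinuousLinearMap

variable {𝕜 E F G : Type*} [RCLike 𝕜]
  [NormedAddCommGroup E] [InnerProductSpace 𝕜 E] [CompleteSpace E]
  [NormedAddCommGroup F] [InnerProductSpace 𝕜 F] [CompleteSpace F]
  [NormedAddCommGroup G] [InnerProductSpace 𝕜 G] [CompleteSpace G]

lemma adjoint_pow_adjoint (T : E →L[𝕜] E) (n : ℕ) : (T† ^ n)† = T ^ n := by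
  rw [← star_eq_adjoint, ← star_eq_adjoint, star_pow, star_star]

lemma norm_sq_apply_eq_sub_of_comp_self_eq {D T : E →L[𝕜] E} (hD : IsSelfAdjoint D)
    (hD2 : D ∘L D = 1 - T ∘L T†) (x : E) :
    ‖D x‖ ^ 2 = ‖x‖ ^ 2 - ‖adjoint T x‖ ^ 2 := by
  rw [apply_norm_sq_eq_inner_adjoint_left, apply_norm_sq_eq_inner_adjoint_left, adjoint_adjoint,
    hD.adjoint_eq, hD2, ← inner_self_eq_norm_sq (𝕜 := 𝕜)]
  simp only [sub_apply, one_apply_eq_self, inner_sub_left, map_sub]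

lemma tendsto_norm_sq_apply_of_tendsto_adjoint_comp_self {ι : Type*} {l : Filter ι}
    {S : ι → E →L[𝕜] F} {Q : E →L[𝕜] G} {x : E}
    (h : Tendsto (fun i => ((S i)† ∘L S i) x) l (𝓝 ((Q† ∘L Q) x))) :
    Tendsto (fun i => ‖S i x‖ ^ 2) l (𝓝 (‖Q x‖ ^ 2)) := by
  simp only [apply_norm_sq_eq_inner_adjoint_left]
  exact ((RCLike.continuous_re.comp (continuous_id.inner continuous_const)).tendsto _).comp h

end ContinuousLinearMap

theorem stmt5_general {H : Type*} [NormedAddCommGroup H] [InnerProductSpace ℂ H] [CompleteSpace H]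
    (T Dst Q : H →L[ℂ] H)
    (hDst : Dst.IsPositive) (hDst2 : Dst ∘L Dst = 1 - T ∘L adjoint T)
    (hQ : Q.IsPositive)
    (hQ2 : ∀ x : H, Tendsto (fun n : ℕ => ((T ^ n) ∘L ((adjoint T) ^ n)) x) atTop
      (nhds ((Q ∘L Q) x)))
    (h : H) :
    HasSum (fun n : ℕ => ‖Dst (((adjoint T) ^ n) h)‖ ^ 2) (‖h‖ ^ 2 - ‖Q h‖ ^ 2) ∧
      Tendsto (fun n : ℕ => ‖((adjoint T) ^ n) h‖ ^ 2) atTop (nhds (‖Q h‖ ^ 2)) := by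
  have hlim : Tendsto (fun n : ℕ => ‖(T† ^ n) h‖ ^ 2) atTop (𝓝 (‖Q h‖ ^ 2)) := by
    refine tendsto_norm_sq_apply_of_tendsto_adjoint_comp_self ?_
    simpa only [adjoint_pow_adjoint, hQ.isSelfAdjoint.adjoint_eq] using hQ2 h
  have hstep (n : ℕ) :
      ‖Dst ((T† ^ n) h)‖ ^ 2 = ‖(T† ^ n) h‖ ^ 2 - ‖(T† ^ (n + 1)) h‖ ^ 2 := by
    rw [norm_sq_apply_eq_sub_of_comp_self_eq hDst.isSelfAdjoint hDst2, pow_succ' (T†) n,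
      mul_apply_eq_comp]
  have hanti : Antitone fun n : ℕ => ‖(T† ^ n) h‖ ^ 2 :=
    antitone_nat_of_succ_le fun n => by linarith [hstep n, sq_nonneg ‖Dst ((T† ^ n) h)‖]
  refine ⟨?_, hlim⟩
  simpa only [hstep, pow_zero, one_apply_eq_self] using hasSum_sub_succ_of_antitone hanti hlim

/-- For a contraction `T`, with `D_{T*} = (I - TT*)^{1/2}` and `Q` the positive square
root of the SOT-limit of `T^n T^{*n}`, one has
`‖h‖² = Σₙ ‖D_{T*} T^{*n} h‖² + limₙ ‖T^{*n} h‖²`, the limit being `‖Q h‖²`. -/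
theorem stmt5 {H : Type*} [NormedAddCommGroup H] [InnerProductSpace ℂ H] [CompleteSpace H]
    (T Dst Q : H →L[ℂ] H) (hT : ‖T‖ ≤ 1)
    (hDst : Dst.IsPositive) (hDst2 : Dst ∘L Dst = 1 - T ∘L adjoint T)
    (hQ : Q.IsPositive)
    (hQ2 : ∀ x : H, Tendsto (fun n : ℕ => ((T ^ n) ∘L ((adjoint T) ^ n)) x) atTop
      (nhds ((Q ∘L Q) x)))
    (h : H) :
    HasSum (fun n : ℕ => ‖Dst (((adjoint T) ^ n) h)‖ ^ 2) (‖h‖ ^ 2 - ‖Q h‖ ^ 2) ∧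
      Tendsto (fun n : ℕ => ‖((adjoint T) ^ n) h‖ ^ 2) atTop (nhds (‖Q h‖ ^ 2)) :=
  stmt5_general T Dst Q hDst hDst2 hQ hQ2 h
end

section
/- Let T be an isometry on a Hilbert space H and let A, B ∈ B(H) satisfy A = B*T and B = A*T. Then the 2×2 block operator X₁ = [[0, A],[B, 0]] on H ⊕ H is hyponormal, i.e. X₁X₁* ≤ X₁*X₁ in the Loewner order. -/
open ContinuousLinearMap

/-- The block operator `X₁ = [[0, A],[B, 0]]` on the Hilbert space `H ⊕₂ H`,
acting by `(h, k) ↦ (A k, B h)`. -/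
noncomputable def blockX {H : Type*} [NormedAddCommGroup H] [InnerProductSpace ℂ H]
    [CompleteSpace H] (A B : H →L[ℂ] H) :
    WithLp 2 (H × H) →L[ℂ] WithLp 2 (H × H) :=
  ((WithLp.prodContinuousLinearEquiv 2 ℂ H H).symm :
      (H × H) →L[ℂ] WithLp 2 (H × H)) ∘L
    ((A ∘L ContinuousLinearMap.snd ℂ H H).prod (B ∘L ContinuousLinearMap.fst ℂ H H)) ∘L
    ((WithLp.prodContinuousLinearEquiv 2 ℂ H H) :
      WithLp 2 (H × H) →L[ℂ] H × H)

/-!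
With `P = T T*`, the range projection of the isometry `T`, the hypotheses give
`A A* = B* P B` and `B B* = A* P A`, so the self-commutator `X₁* X₁ - X₁ X₁*` is the diagonal
operator `diag(B* (1 - P) B, A* (1 - P) A)`. As `1 - P` is again a projection, this equals
`Y* Y` for `Y = [[0, (1 - P) A], [(1 - P) B, 0]]`, hence is positive.
-/

section StarRing

variable {R : Type*}

theorem isStarProjection_mul_star_of_star_mul_self [Monoid R] [StarMul R] {t : R}
    (ht : star t * t = 1) : IsStarProjection (t * star t) where
  isIdempotentElem := by
    rw [IsIdempotentElem, mul_assoc, ← mul_assoc (star t), ht, one_mul]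
  isSelfAdjoint := .mul_star_self t

theorem IsStarProjection.star_mul_self [Mul R] [Star R] {p : R} (hp : IsStarProjection p) :
    star p * p = p := by
  rw [hp.isSelfAdjoint.star_eq, hp.isIdempotentElem.eq]

theorem star_mul_self_sub_mul_star_of_eq_star_mul [Ring R] [StarRing R] {a b t : R}
    (ht : star t * t = 1) (ha : a = star b * t) :
    star b * b - a * star a = star ((1 - t * star t) * b) * ((1 - t * star t) * b) := by
  have hq := (isStarProjection_mul_star_of_star_mul_self ht).one_sub
  rw [star_mul, mul_assoc (star b), ← mul_assoc (star _) _ b, hq.star_mul_self, ha]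
  simp only [star_mul, star_star, mul_sub, sub_mul, one_mul, mul_assoc]

end StarRing

section BlockOperator

variable {H : Type*} [NormedAddCommGroup H] [InnerProductSpace ℂ H] [CompleteSpace H]

theorem blockX_fst (A B : H →L[ℂ] H) (x : WithLp 2 (H × H)) : (blockX A B x).fst = A x.snd :=
  rfl

theorem blockX_snd (A B : H →L[ℂ] H) (x : WithLp 2 (H × H)) : (blockX A B x).snd = B x.fst :=
  rfl

theorem adjoint_blockX (A B : H →L[ℂ] H) :
    adjoint (blockX A B) = blockX (adjoint B) (adjoint A) := by
  refine ((eq_adjoint_iff (blockX (adjoint B) (adjoint A)) (blockX A B)).mpr fun x y => ?_).symm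
  simp only [WithLp.prod_inner_apply, WithLp.ofLp_fst, WithLp.ofLp_snd, blockX_fst, blockX_snd,
    adjoint_inner_left]
  ring

end BlockOperator

/-- If `T` is an isometry and `A = B*T`, `B = A*T`, then `X₁ = [[0, A],[B, 0]]` is
hyponormal: `X₁X₁* ≤ X₁*X₁`. -/
theorem stmt9 {H : Type*} [NormedAddCommGroup H] [InnerProductSpace ℂ H] [CompleteSpace H]
    (A B T : H →L[ℂ] H) (hT : adjoint T ∘L T = 1)
    (hA : A = adjoint B ∘L T) (hB : B = adjoint A ∘L T) :
    (adjoint (blockX A B) ∘L blockX A B - blockX A B ∘L adjoint (blockX A B)).IsPositive := by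
  set Q := 1 - T ∘L adjoint T
  have hBA : adjoint B ∘L B - A ∘L adjoint A = adjoint (Q ∘L B) ∘L (Q ∘L B) :=
    star_mul_self_sub_mul_star_of_eq_star_mul hT hA
  have hAB : adjoint A ∘L A - B ∘L adjoint B = adjoint (Q ∘L A) ∘L (Q ∘L A) :=
    star_mul_self_sub_mul_star_of_eq_star_mul hT hB
  have hX : adjoint (blockX A B) ∘L blockX A B - blockX A B ∘L adjoint (blockX A B)
      = adjoint (blockX (Q ∘L A) (Q ∘L B)) ∘L blockX (Q ∘L A) (Q ∘L B) := by
    ext x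
    refine WithLp.ofLp_injective (p := 2) (Prod.ext ?_ ?_)
    · simpa only [adjoint_blockX, sub_apply, WithLp.ofLp_fst, WithLp.sub_fst,
        blockX_fst, blockX_snd, comp_apply] using congr($hBA x.fst)
    · simpa only [adjoint_blockX, sub_apply, WithLp.ofLp_snd, WithLp.sub_snd,
        blockX_fst, blockX_snd, comp_apply] using congr($hAB x.snd)
  rw [hX]
  exact isPositive_adjoint_comp_self _
end

section
/- Let (A, B, T) be a pseudo-commutative tetrablock isometry on a Hilbert space H, i.e. T is an isometry, AT = TA, BT = TB, and A = B*T (equivalently B = A*T). Then the spectral radius of the product AB satisfies r(AB) = max{‖A‖², ‖B‖²}. -/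
/-!
The hypotheses make the block operator `M = [[0, A], [B, 0]]` hyponormal, that is
`‖A* y‖ ≤ ‖B y‖` and `‖B* y‖ ≤ ‖A y‖`: indeed `A* = T* B`, `B = A* T` gives `B* = T* A`, and
`T*` is a contraction. In particular `‖A‖ = ‖B‖`, so `r(AB) ≤ ‖A‖ ‖B‖ = ‖B‖²`.
For a hyponormal `M` the norms along an orbit are log-convex,
`‖M^(k+1) x‖² ≤ ‖M^k x‖ ‖M^(k+2) x‖`, which for `x ⊕ 0` yields
`‖B x‖^(2n) ‖x‖ ≤ ‖x‖^(2n) ‖(AB)^n x‖`. Hence `‖(AB)^n‖ ≥ ‖B‖^(2n)`, and Gelfand's formula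
gives `r(AB) ≥ ‖B‖²`.
-/

open ContinuousLinearMap Filter
open scoped NNReal ENNReal

theorem mul_le_mul_succ_of_sq_le {a : ℕ → ℝ} (ha : ∀ k, 0 ≤ a k)
    (h : ∀ k, a (k + 1) ^ 2 ≤ a k * a (k + 2)) (k : ℕ) :
    a 1 * a k ≤ a 0 * a (k + 1) := by
  induction k with
  | zero => rw [mul_comm]
  | succ k ih =>
    rcases (ha (k + 1)).eq_or_lt with hk | hk
    · rw [← hk, mul_zero]
      exact mul_nonneg (ha 0) (ha _)
    · refine le_of_mul_le_mul_right ?_ hk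
      calc a 1 * a (k + 1) * a (k + 1) = a 1 * a (k + 1) ^ 2 := by ring
        _ ≤ a 1 * (a k * a (k + 2)) := mul_le_mul_of_nonneg_left (h k) (ha 1)
        _ = a 1 * a k * a (k + 2) := by ring
        _ ≤ a 0 * a (k + 1) * a (k + 2) := mul_le_mul_of_nonneg_right ih (ha _)
        _ = a 0 * a (k + 2) * a (k + 1) := by ring

theorem pow_mul_le_pow_mul_of_sq_le {a : ℕ → ℝ} (ha : ∀ k, 0 ≤ a k)
    (h : ∀ k, a (k + 1) ^ 2 ≤ a k * a (k + 2)) (k : ℕ) :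
    a 1 ^ k * a 0 ≤ a 0 ^ k * a k := by
  induction k with
  | zero => simp
  | succ k ih =>
    calc a 1 ^ (k + 1) * a 0 = a 1 * (a 1 ^ k * a 0) := by ring
      _ ≤ a 1 * (a 0 ^ k * a k) := mul_le_mul_of_nonneg_left ih (ha 1)
      _ = a 0 ^ k * (a 1 * a k) := by ring
      _ ≤ a 0 ^ k * (a 0 * a (k + 1)) :=
        mul_le_mul_of_nonneg_left (mul_le_mul_succ_of_sq_le ha h k) (pow_nonneg (ha 0) k)
      _ = a 0 ^ (k + 1) * a (k + 1) := by ring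

theorem le_spectralRadius_of_pow_le_nnnorm_pow {A : Type*} [NormedRing A] [NormedAlgebra ℂ A]
    [CompleteSpace A] (a : A) {c : ℝ≥0} (h : ∀ n ≠ 0, c ^ n ≤ ‖a ^ n‖₊) :
    (c : ℝ≥0∞) ≤ spectralRadius ℂ a := by
  refine ge_of_tendsto (spectrum.pow_nnnorm_pow_one_div_tendsto_nhds_spectralRadius a) ?_
  filter_upwards [eventually_ne_atTop 0] with n hn
  calc (c : ℝ≥0∞) = ((c ^ n : ℝ≥0) : ℝ≥0∞) ^ (1 / n : ℝ) := by
        rw [← ENNReal.coe_rpow_of_nonneg _ (by positivity), one_div,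
          NNReal.pow_rpow_inv_natCast c hn]
    _ ≤ (‖a ^ n‖₊ : ℝ≥0∞) ^ (1 / n : ℝ) := by
        gcongr
        exact_mod_cast h n hn

namespace ContinuousLinearMap

theorem opNorm_pow_le_of_forall_pow_le {E F : Type*} [NormedAddCommGroup E]
    [NormedSpace ℂ E] [NormedAddCommGroup F] [NormedSpace ℂ F] (f : E →L[ℂ] F) {m : ℕ}
    (hm : m ≠ 0) {C : ℝ} (hC : 0 ≤ C) (h : ∀ x, ‖f x‖ ^ m ≤ C * ‖x‖ ^ m) :
    ‖f‖ ^ m ≤ C := by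
  have hroot : (C ^ (m⁻¹ : ℝ)) ^ m = C := Real.rpow_inv_natCast_pow hC hm
  have hf : ‖f‖ ≤ C ^ (m⁻¹ : ℝ) := by
    refine f.opNorm_le_bound (by positivity) fun x => ?_
    rw [← pow_le_pow_iff_left₀ (norm_nonneg _) (by positivity) hm, mul_pow, hroot]
    exact h x
  exact (pow_le_pow_left₀ (norm_nonneg f) hf m).trans_eq hroot

variable {H : Type*} [NormedAddCommGroup H] [InnerProductSpace ℂ H]

/-- `alternatingOrbit A B k x` is the nonzero component of `M ^ k (x ⊕ 0)`, where
`M = [[0, A], [B, 0]]` on `H ⊕ H`. -/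
def alternatingOrbit (A B : H →L[ℂ] H) : ℕ → H → H
  | 0, x => x
  | k + 1, x => alternatingOrbit B A k (B x)

theorem alternatingOrbit_two_mul (A B : H →L[ℂ] H) (n : ℕ) (x : H) :
    alternatingOrbit A B (2 * n) x = ((A ∘L B) ^ n) x := by
  induction n generalizing x with
  | zero => rfl
  | succ n ih =>
    rw [pow_succ]
    exact ih (A (B x))

variable [CompleteSpace H]

theorem nnnorm_eq_of_forall_norm_adjoint_apply_le {A B : H →L[ℂ] H}
    (hA : ∀ y, ‖adjoint A y‖ ≤ ‖B y‖) (hB : ∀ y, ‖adjoint B y‖ ≤ ‖A y‖) : ‖A‖₊ = ‖B‖₊ := by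
  have key : ∀ {X Y : H →L[ℂ] H}, (∀ y, ‖adjoint X y‖ ≤ ‖Y y‖) → ‖X‖ ≤ ‖Y‖ := fun {X Y} h => by
    rw [← LinearIsometryEquiv.norm_map adjoint X]
    exact opNorm_le_bound _ (norm_nonneg Y) fun y => (h y).trans (le_opNorm Y y)
  exact NNReal.coe_injective ((key hA).antisymm (key hB))

theorem norm_apply_sq_le_of_forall_norm_adjoint_apply_le {A B : H →L[ℂ] H}
    (hB : ∀ y, ‖adjoint B y‖ ≤ ‖A y‖) (x : H) : ‖B x‖ ^ 2 ≤ ‖x‖ * ‖A (B x)‖ :=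
  calc ‖B x‖ ^ 2 = RCLike.re (inner ℂ x (adjoint B (B x))) := by
        rw [adjoint_inner_right, inner_self_eq_norm_sq]
    _ ≤ ‖x‖ * ‖adjoint B (B x)‖ := (RCLike.re_le_norm _).trans (norm_inner_le_norm _ _)
    _ ≤ ‖x‖ * ‖A (B x)‖ := mul_le_mul_of_nonneg_left (hB _) (norm_nonneg x)

theorem norm_alternatingOrbit_sq_le {A B : H →L[ℂ] H}
    (hA : ∀ y, ‖adjoint A y‖ ≤ ‖B y‖) (hB : ∀ y, ‖adjoint B y‖ ≤ ‖A y‖) (k : ℕ) (x : H) :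
    ‖alternatingOrbit A B (k + 1) x‖ ^ 2 ≤
      ‖alternatingOrbit A B k x‖ * ‖alternatingOrbit A B (k + 2) x‖ := by
  induction k generalizing A B x with
  | zero => exact norm_apply_sq_le_of_forall_norm_adjoint_apply_le hB x
  | succ k ih => exact ih hB hA (B x)

theorem norm_pow_le_norm_comp_pow {A B : H →L[ℂ] H}
    (hA : ∀ y, ‖adjoint A y‖ ≤ ‖B y‖) (hB : ∀ y, ‖adjoint B y‖ ≤ ‖A y‖) {n : ℕ} (hn : n ≠ 0) :
    ‖B‖ ^ (2 * n) ≤ ‖(A ∘L B) ^ n‖ := by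
  refine B.opNorm_pow_le_of_forall_pow_le (by omega) (norm_nonneg _) fun x => ?_
  set a : ℕ → ℝ := fun k => ‖alternatingOrbit A B k x‖
  have hlog : a 1 ^ (2 * n) * a 0 ≤ a 0 ^ (2 * n) * a (2 * n) :=
    pow_mul_le_pow_mul_of_sq_le (a := a) (fun k => norm_nonneg _)
      (fun k => norm_alternatingOrbit_sq_le hA hB k x) _
  rcases (norm_nonneg x).eq_or_lt with hx | hx
  · rw [← hx, zero_pow (by omega), mul_zero, norm_eq_zero.1 hx.symm, map_zero, norm_zero,
      zero_pow (by omega)]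
  refine le_of_mul_le_mul_right ?_ hx
  calc ‖B x‖ ^ (2 * n) * ‖x‖ = a 1 ^ (2 * n) * a 0 := rfl
    _ ≤ a 0 ^ (2 * n) * a (2 * n) := hlog
    _ = ‖x‖ ^ (2 * n) * ‖((A ∘L B) ^ n) x‖ := by simp only [a, alternatingOrbit_two_mul]; rfl
    _ ≤ ‖x‖ ^ (2 * n) * (‖(A ∘L B) ^ n‖ * ‖x‖) :=
        mul_le_mul_of_nonneg_left (le_opNorm _ _) (by positivity)
    _ = ‖(A ∘L B) ^ n‖ * ‖x‖ ^ (2 * n) * ‖x‖ := by ring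

theorem spectralRadius_comp_eq_nnnorm_sq {A B : H →L[ℂ] H}
    (hA : ∀ y, ‖adjoint A y‖ ≤ ‖B y‖) (hB : ∀ y, ‖adjoint B y‖ ≤ ‖A y‖) :
    spectralRadius ℂ (A ∘L B) = (‖B‖₊ : ℝ≥0∞) ^ 2 := by
  have hr : spectralRadius ℂ (A ∘L B) ≤ ‖A ∘L B‖₊ * ‖(1 : H →L[ℂ] H)‖₊ := by
    simpa using spectrum.spectralRadius_le_pow_nnnorm_pow_one_div ℂ (A ∘L B) 0
  have hnorm := nnnorm_eq_of_forall_norm_adjoint_apply_le hA hB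
  refine le_antisymm (hr.trans ?_) ?_
  · rw [← ENNReal.coe_mul, ← ENNReal.coe_pow, ENNReal.coe_le_coe, sq]
    exact mul_le_of_le_of_le_one ((opNNNorm_comp_le A B).trans_eq (by rw [hnorm])) norm_id_le
  · rw [← ENNReal.coe_pow]
    refine le_spectralRadius_of_pow_le_nnnorm_pow _ fun n hn => ?_
    rw [← pow_mul, ← NNReal.coe_le_coe]
    exact norm_pow_le_norm_comp_pow hA hB hn

theorem norm_adjoint_apply_le_of_eq_adjoint_comp {A B T : H →L[ℂ] H} (hT : ‖T‖ ≤ 1)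
    (hA : A = adjoint B ∘L T) (y : H) : ‖adjoint A y‖ ≤ ‖B y‖ := by
  rw [hA, adjoint_comp, adjoint_adjoint, comp_apply]
  calc ‖adjoint T (B y)‖ ≤ ‖adjoint T‖ * ‖B y‖ := le_opNorm _ _
    _ ≤ ‖B y‖ := by
        rw [LinearIsometryEquiv.norm_map]
        exact mul_le_of_le_one_left (norm_nonneg _) hT

theorem eq_adjoint_comp_of_adjoint_comp_self_eq_one {A B T : H →L[ℂ] H}
    (hT : adjoint T ∘L T = 1) (hBT : B ∘L T = T ∘L B) (hA : A = adjoint B ∘L T) :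
    B = adjoint A ∘L T := by
  rw [hA, adjoint_comp, adjoint_adjoint, comp_assoc, hBT, ← comp_assoc, hT, one_def, id_comp]

end ContinuousLinearMap

theorem stmt11_general {H : Type*} [NormedAddCommGroup H] [InnerProductSpace ℂ H] [CompleteSpace H]
    (A B T : H →L[ℂ] H) (hT : adjoint T ∘L T = 1)
    (hBT : B ∘L T = T ∘L B)
    (hA : A = adjoint B ∘L T) :
    spectralRadius ℂ (A ∘L B) = max ((‖A‖₊ : ENNReal) ^ 2) ((‖B‖₊ : ENNReal) ^ 2) := by
  have hT1 : ‖T‖ ≤ 1 := opNorm_le_bound _ zero_le_one fun x => by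
    rw [one_mul, (norm_map_iff_adjoint_comp_self T).2 hT x]
  have hAB := norm_adjoint_apply_le_of_eq_adjoint_comp hT1 hA
  have hBA := norm_adjoint_apply_le_of_eq_adjoint_comp hT1
    (eq_adjoint_comp_of_adjoint_comp_self_eq_one hT hBT hA)
  rw [nnnorm_eq_of_forall_norm_adjoint_apply_le hAB hBA, max_self,
    spectralRadius_comp_eq_nnnorm_sq hAB hBA]

/-- For a pseudo-commutative tetrablock isometry `(A, B, T)`, the spectral radius of
`AB` equals `max{‖A‖², ‖B‖²}`. -/
theorem stmt11 {H : Type*} [NormedAddCommGroup H] [InnerProductSpace ℂ H] [CompleteSpace H]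
    (A B T : H →L[ℂ] H) (hT : adjoint T ∘L T = 1)
    (hAT : A ∘L T = T ∘L A) (hBT : B ∘L T = T ∘L B)
    (hA : A = adjoint B ∘L T) :
    spectralRadius ℂ (A ∘L B) = max ((‖A‖₊ : ENNReal) ^ 2) ((‖B‖₊ : ENNReal) ^ 2) :=
  stmt11_general A B T hT hBT hA
end

section
/- Let T be a contraction on a Hilbert space H with defect operator D_T = (I − T*T)^{1/2}, and let X, Y be bounded operators on the defect space 𝒟_T = closure(Ran D_T) satisfying X D_T + Y* D_T T = 0 and Y D_T + X* D_T T = 0 (as operators H → 𝒟_T). Then X = 0 and Y = 0. -/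
/-!
The form `(x, y) ↦ ⟪X (D x), D y⟫` is invariant under `(x, y) ↦ (T x, T y)`: rewrite `X D x`
by the first relation, move `Y*` across the inner product and rewrite `Y D y` by the second.
Since `‖D x‖² = ‖x‖² - ‖T x‖²`, the squares `‖D Tⁿ x‖²` are the successive decrements of the
decreasing sequence `‖Tⁿ x‖²`, so `D Tⁿ x → 0` and the form vanishes. Thus `X D x` lies in
`closure (Ran D) ∩ (Ran D)ᗮ = 0`, so `X` vanishes on `𝒟_T` and on `𝒟_Tᗮ`; then
`Y D = -X* D T = 0` gives `Y = 0` in the same way.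
-/

open ContinuousLinearMap Filter Topology

theorem tendsto_apply_pow_apply_of_norm_sq_eq {𝕜 E : Type*} [NormedField 𝕜]
    [SeminormedAddCommGroup E] [NormedSpace 𝕜 E] {T D : E →L[𝕜] E}
    (hTD : ∀ x, ‖D x‖ ^ 2 = ‖x‖ ^ 2 - ‖T x‖ ^ 2) (x : E) :
    Tendsto (fun n => D ((T ^ n) x)) atTop (𝓝 0) := by
  set a : ℕ → ℝ := fun n => ‖(T ^ n) x‖ ^ 2
  have hstep : ∀ n, ‖D ((T ^ n) x)‖ ^ 2 = a n - a (n + 1) := fun n => by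
    show _ = ‖(T ^ n) x‖ ^ 2 - ‖(T ^ (n + 1)) x‖ ^ 2
    rw [hTD, pow_succ' T n]; rfl
  have ha : Antitone a := antitone_nat_of_succ_le fun n => by
    have := hstep n
    nlinarith [sq_nonneg ‖D ((T ^ n) x)‖]
  have hlim : Tendsto a atTop (𝓝 (⨅ n, a n)) :=
    tendsto_atTop_ciInf ha ⟨0, by rintro _ ⟨n, rfl⟩; positivity⟩
  have hsq : Tendsto (fun n => ‖D ((T ^ n) x)‖ ^ 2) atTop (𝓝 0) := by
    rw [funext hstep]; simpa using hlim.sub (hlim.comp (tendsto_add_atTop_nat 1))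
  rw [tendsto_zero_iff_norm_tendsto_zero]
  simpa using hsq.sqrt

section Defect

variable {𝕜 H : Type*} [RCLike 𝕜] [NormedAddCommGroup H] [InnerProductSpace 𝕜 H]

local notation "⟪" x ", " y "⟫" => @inner 𝕜 _ _ x y

theorem comp_eq_zero_of_inner_apply_apply_eq_zero {D X : H →L[𝕜] H}
    (hran : ∀ x, X x ∈ (LinearMap.range (D : H →ₗ[𝕜] H)).topologicalClosure)
    (horth : ∀ x y, ⟪X (D x), D y⟫ = 0) : X ∘L D = 0 := by
  ext x
  set K := LinearMap.range (D : H →ₗ[𝕜] H)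
  have hperp : X (D x) ∈ K.topologicalClosureᗮ := by
    rw [Submodule.orthogonal_closure, Submodule.mem_orthogonal']
    rintro _ ⟨y, rfl⟩
    exact horth x y
  exact Submodule.disjoint_def.1 K.topologicalClosure.orthogonal_disjoint _ (hran _) hperp

variable [CompleteSpace H]

theorem eq_zero_of_comp_eq_zero_of_orthogonal_range {F : Type*} [NormedAddCommGroup F]
    [NormedSpace 𝕜 F] {D : H →L[𝕜] H} {X : H →L[𝕜] F} (hXD : X ∘L D = 0)
    (hker : ∀ y ∈ (LinearMap.range (D : H →ₗ[𝕜] H)).topologicalClosureᗮ, X y = 0) : X = 0 := by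
  set K := (LinearMap.range (D : H →ₗ[𝕜] H)).topologicalClosure
  have hK : K ≤ LinearMap.ker (X : H →ₗ[𝕜] F) :=
    Submodule.topologicalClosure_minimal _ (by rintro _ ⟨x, rfl⟩; exact congr($hXD x))
      (isClosed_ker X)
  have hKperp : Kᗮ ≤ LinearMap.ker (X : H →ₗ[𝕜] F) := hker
  have htop := Submodule.sup_orthogonal_of_hasOrthogonalProjection (K := K)
  ext x
  exact (sup_le hK hKperp) (htop ▸ Submodule.mem_top : x ∈ K ⊔ Kᗮ)

theorem norm_sq_apply_eq_of_comp_self_eq {T D : H →L[𝕜] H} (hD : IsSelfAdjoint D)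
    (hD2 : D ∘L D = 1 - adjoint T ∘L T) (x : H) : ‖D x‖ ^ 2 = ‖x‖ ^ 2 - ‖T x‖ ^ 2 := by
  rw [apply_norm_sq_eq_inner_adjoint_left, hD.adjoint_eq, hD2, sub_apply, inner_sub_left,
    map_sub, ← apply_norm_sq_eq_inner_adjoint_left, one_apply_eq_self, inner_self_eq_norm_sq]

theorem inner_apply_apply_eq_of_comp_add_adjoint_comp_eq_zero {T D X Y : H →L[𝕜] H}
    (hXY : X ∘L D + adjoint Y ∘L (D ∘L T) = 0) (hYX : Y ∘L D + adjoint X ∘L (D ∘L T) = 0)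
    (x y : H) : ⟪X (D x), D y⟫ = ⟪X (D (T x)), D (T y)⟫ := by
  have hX : X (D x) = -adjoint Y (D (T x)) := eq_neg_of_add_eq_zero_left (congr($hXY x))
  have hY : Y (D y) = -adjoint X (D (T y)) := eq_neg_of_add_eq_zero_left (congr($hYX y))
  rw [hX, inner_neg_left, adjoint_inner_left, hY, inner_neg_right, neg_neg, adjoint_inner_right]

theorem inner_apply_apply_eq_zero_of_comp_add_adjoint_comp_eq_zero {T D X Y : H →L[𝕜] H}
    (hTD : ∀ x, ‖D x‖ ^ 2 = ‖x‖ ^ 2 - ‖T x‖ ^ 2)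
    (hXY : X ∘L D + adjoint Y ∘L (D ∘L T) = 0) (hYX : Y ∘L D + adjoint X ∘L (D ∘L T) = 0)
    (x y : H) : ⟪X (D x), D y⟫ = 0 := by
  have hconst : ∀ n : ℕ, ⟪X (D ((T ^ n) x)), D ((T ^ n) y)⟫ = ⟪X (D x), D y⟫ := by
    intro n
    induction n with
    | zero => rfl
    | succ n ih =>
      rw [← ih, inner_apply_apply_eq_of_comp_add_adjoint_comp_eq_zero hXY hYX ((T ^ n) x),
        pow_succ']
      rfl
  have hlim : Tendsto (fun n : ℕ => ⟪X (D ((T ^ n) x)), D ((T ^ n) y)⟫) atTop (𝓝 ⟪X 0, 0⟫) :=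
    ((X.continuous.tendsto 0).comp (tendsto_apply_pow_apply_of_norm_sq_eq hTD x)).inner
      (tendsto_apply_pow_apply_of_norm_sq_eq hTD y)
  simp only [hconst, map_zero, inner_zero_left] at hlim
  exact tendsto_nhds_unique tendsto_const_nhds hlim

end Defect

theorem stmt14_general {H : Type*} [NormedAddCommGroup H] [InnerProductSpace ℂ H] [CompleteSpace H]
    (T D X Y : H →L[ℂ] H)
    (hD : D.IsPositive) (hD2 : D ∘L D = 1 - adjoint T ∘L T)
    (hXran : ∀ x : H, X x ∈ (LinearMap.range (D : H →ₗ[ℂ] H)).topologicalClosure)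
    (hXker : ∀ y ∈ ((LinearMap.range (D : H →ₗ[ℂ] H)).topologicalClosure : Submodule ℂ H)ᗮ, X y = 0)
    (hYker : ∀ y ∈ ((LinearMap.range (D : H →ₗ[ℂ] H)).topologicalClosure : Submodule ℂ H)ᗮ, Y y = 0)
    (h1 : X ∘L D + adjoint Y ∘L (D ∘L T) = 0)
    (h2 : Y ∘L D + adjoint X ∘L (D ∘L T) = 0) :
    X = 0 ∧ Y = 0 := by
  have hTD := norm_sq_apply_eq_of_comp_self_eq hD.isSelfAdjoint hD2
  have hXD : X ∘L D = 0 := comp_eq_zero_of_inner_apply_apply_eq_zero hXran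
    (inner_apply_apply_eq_zero_of_comp_add_adjoint_comp_eq_zero hTD h1 h2)
  have hX : X = 0 := eq_zero_of_comp_eq_zero_of_orthogonal_range hXD hXker
  have hYD : Y ∘L D = 0 := by simpa [hX] using h2
  exact ⟨hX, eq_zero_of_comp_eq_zero_of_orthogonal_range hYD hYker⟩

/-- Let `T` be a contraction with defect operator `D = (I - T*T)^{1/2}` and defect space
`𝒟_T = closure (Ran D)`.  If `X`, `Y` are operators of `𝒟_T` (i.e. mapping `𝒟_T` into
itself and vanishing on `𝒟_T^⊥`) satisfying `X D + Y* D T = 0` and `Y D + X* D T = 0`,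
then `X = 0` and `Y = 0`. -/
theorem stmt14 {H : Type*} [NormedAddCommGroup H] [InnerProductSpace ℂ H] [CompleteSpace H]
    (T D X Y : H →L[ℂ] H) (hT : ‖T‖ ≤ 1)
    (hD : D.IsPositive) (hD2 : D ∘L D = 1 - adjoint T ∘L T)
    (hXran : ∀ x : H, X x ∈ (LinearMap.range (D : H →ₗ[ℂ] H)).topologicalClosure)
    (hXker : ∀ y ∈ ((LinearMap.range (D : H →ₗ[ℂ] H)).topologicalClosure : Submodule ℂ H)ᗮ, X y = 0)
    (hYran : ∀ x : H, Y x ∈ (LinearMap.range (D : H →ₗ[ℂ] H)).topologicalClosure)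
    (hYker : ∀ y ∈ ((LinearMap.range (D : H →ₗ[ℂ] H)).topologicalClosure : Submodule ℂ H)ᗮ, Y y = 0)
    (h1 : X ∘L D + adjoint Y ∘L (D ∘L T) = 0)
    (h2 : Y ∘L D + adjoint X ∘L (D ∘L T) = 0) :
    X = 0 ∧ Y = 0 :=
  stmt14_general T D X Y hD hD2 hXran hXker hYker h1 h2
end

section
/- Let G₁, G₂ be bounded operators on a Hilbert space E such that the numerical radius ν(G₁ + z G₂) ≤ 1 for every z in the closed unit disk. Then also ν(G₁* + z G₂) ≤ 1 for every z in the closed unit disk. -/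
open ContinuousLinearMap

/-- The numerical radius of a bounded operator: `ν(X) = sup{|⟨Xx, x⟩| : ‖x‖ = 1}`. -/
noncomputable def numericalRadius {H : Type*} [NormedAddCommGroup H] [InnerProductSpace ℂ H]
    (X : H →L[ℂ] H) : ℝ :=
  ⨆ x : {x : H // ‖x‖ = 1}, ‖(inner ℂ (X x.1) x.1 : ℂ)‖

/-!
For a unit vector `x` put `a = ⟨G₁x, x⟩` and `b = ⟨G₂x, x⟩`. Then `⟨(G₁* + zG₂)x, x⟩ = conj a + conj z · b`,
whose modulus is that of `a + z · conj b`. Since `|z · conj b| ≤ |b|`, we can write `z · conj b = w̄ b`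
with `|w| ≤ 1`, and `a + w̄ b = ⟨(G₁ + wG₂)x, x⟩` has modulus at most `1` by hypothesis.
-/

lemma exists_norm_le_one_mul_eq {𝕜 : Type*} [NormedDivisionRing 𝕜] {b c : 𝕜} (h : ‖c‖ ≤ ‖b‖) :
    ∃ w : 𝕜, ‖w‖ ≤ 1 ∧ w * b = c := by
  rcases eq_or_ne b 0 with rfl | hb
  · exact ⟨0, by simp, by simpa using (norm_le_zero_iff.mp (h.trans_eq norm_zero)).symm⟩
  · refine ⟨c / b, ?_, div_mul_cancel₀ c hb⟩
    rw [norm_div]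
    exact div_le_one_of_le₀ h (norm_nonneg b)

lemma RCLike.norm_conj_add_mul_le {𝕜 : Type*} [RCLike 𝕜] {a b z : 𝕜} {r : ℝ}
    (h : ∀ w : 𝕜, ‖w‖ ≤ 1 → ‖a + w * b‖ ≤ r) (hz : ‖z‖ ≤ 1) :
    ‖starRingEnd 𝕜 a + z * b‖ ≤ r := by
  obtain ⟨w, hw, hwb⟩ : ∃ w : 𝕜, ‖w‖ ≤ 1 ∧ w * b = starRingEnd 𝕜 z * starRingEnd 𝕜 b := by
    refine exists_norm_le_one_mul_eq ?_
    rw [norm_mul, RCLike.norm_conj, RCLike.norm_conj]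
    exact mul_le_of_le_one_left (norm_nonneg b) hz
  calc ‖starRingEnd 𝕜 a + z * b‖ = ‖a + w * b‖ := by
        rw [← RCLike.norm_conj, map_add, map_mul, RCLike.conj_conj, hwb]
    _ ≤ r := h w hw

section NumericalRadius

variable {E : Type*} [NormedAddCommGroup E] [InnerProductSpace ℂ E]

lemma norm_inner_le_numericalRadius (X : E →L[ℂ] E) {x : E} (hx : ‖x‖ = 1) :
    ‖(inner ℂ (X x) x : ℂ)‖ ≤ numericalRadius X := by
  refine le_ciSup (f := fun y : {x : E // ‖x‖ = 1} => ‖(inner ℂ (X y.1) y.1 : ℂ)‖)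
    ⟨‖X‖, ?_⟩ ⟨x, hx⟩
  rintro r ⟨y, rfl⟩
  calc ‖(inner ℂ (X y.1) y.1 : ℂ)‖ ≤ ‖X y.1‖ * ‖y.1‖ := norm_inner_le_norm _ _
    _ ≤ ‖X‖ * ‖y.1‖ * ‖y.1‖ := by gcongr; exact X.le_opNorm _
    _ = ‖X‖ := by rw [y.2, mul_one, mul_one]

lemma numericalRadius_le_of_forall {X : E →L[ℂ] E} {r : ℝ} (hr : 0 ≤ r)
    (h : ∀ x : E, ‖x‖ = 1 → ‖(inner ℂ (X x) x : ℂ)‖ ≤ r) : numericalRadius X ≤ r :=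
  Real.iSup_le (fun x => h x.1 x.2) hr

lemma inner_add_smul_apply_self (A B : E →L[ℂ] E) (w : ℂ) (x : E) :
    (inner ℂ ((A + w • B) x) x : ℂ) = inner ℂ (A x) x + starRingEnd ℂ w * inner ℂ (B x) x := by
  rw [add_apply, smul_apply, inner_add_left, inner_smul_left]

lemma inner_adjoint_add_smul_apply_self [CompleteSpace E] (A B : E →L[ℂ] E) (z : ℂ) (x : E) :
    (inner ℂ ((adjoint A + z • B) x) x : ℂ) =
      starRingEnd ℂ (inner ℂ (A x) x) + starRingEnd ℂ z * inner ℂ (B x) x := by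
  rw [inner_add_smul_apply_self, adjoint_inner_left, inner_conj_symm]

end NumericalRadius

/-- If `ν(G₁ + z G₂) ≤ 1` for every `z` in the closed unit disk, then also
`ν(G₁* + z G₂) ≤ 1` for every `z` in the closed unit disk. -/
theorem stmt16 {E : Type*} [NormedAddCommGroup E] [InnerProductSpace ℂ E] [CompleteSpace E]
    (G₁ G₂ : E →L[ℂ] E)
    (h : ∀ z : ℂ, ‖z‖ ≤ 1 → numericalRadius (G₁ + z • G₂) ≤ 1) :
    ∀ z : ℂ, ‖z‖ ≤ 1 → numericalRadius (adjoint G₁ + z • G₂) ≤ 1 := by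
  intro z hz
  refine numericalRadius_le_of_forall zero_le_one fun x hx => ?_
  rw [inner_adjoint_add_smul_apply_self]
  refine RCLike.norm_conj_add_mul_le (fun w hw => ?_) (by rwa [RCLike.norm_conj])
  have hw' : ‖starRingEnd ℂ w‖ ≤ 1 := by rwa [RCLike.norm_conj]
  simpa only [inner_add_smul_apply_self, RCLike.conj_conj] using
    (norm_inner_le_numericalRadius _ hx).trans (h _ hw')
end
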